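/- arXiv:1410.3371 — 2 statements merged into one kernel-verified Lean document; each statement's English description precedes it below -/
import Mathlib

section
/- For every positive integer n, every real β with 0 ≤ β < 1, every integer k ≥ 1, and every integer r ≥ 0, the moment integral of the Jain basis function satisfies ∫_0^∞ L_{n,k}^{(β)}(t) t^r dt = ((r+1)! / (k n^{r+1})) e^{−kβ} Σ_{s=0}^{k−1} C(k+r−s, r+1) (kβ)^s / s!, where C(·,·) denotes the binomial coefficient. -/
open MeasureTheory Real Filter

/-- Jain basis function `L_{n,k}^{(β)}(t) = (n t (n t + k β)^{k-1} / k!) e^{-(n t + k β)}`. -/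
noncomputable def jainL (n : ℕ) (β : ℝ) (k : ℕ) (t : ℝ) : ℝ :=
  (n : ℝ) * t * ((n : ℝ) * t + (k : ℝ) * β) ^ ((k : ℤ) - 1) / (Nat.factorial k : ℝ) *
    Real.exp (-((n : ℝ) * t + (k : ℝ) * β))

/-! Expanding `(n t + k β)^{k-1}` binomially reduces each moment of `L_{n,k}^{(β)}` to Gamma
integrals `∫₀^∞ t^m e^{-n t} dt = m! / n^{m+1}`; the closed form then comes from the identity
`k · s! · C(k-1, s) · (k+r-s)! = (r+1)! · C(k+r-s, r+1) · k!`. -/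

open Finset

lemma integrableOn_pow_mul_exp_neg_mul_Ioi (m : ℕ) {a : ℝ} (ha : 0 < a) :
    IntegrableOn (fun t : ℝ => t ^ m * exp (-(a * t))) (Set.Ioi 0) := by
  refine (integrableOn_rpow_mul_exp_neg_mul_rpow (p := 1) (s := m)
    (by linarith [m.cast_nonneg (α := ℝ)]) one_pos ha).congr_fun (fun t _ => ?_) measurableSet_Ioi
  simp only [rpow_natCast, rpow_one, neg_mul]

lemma integral_pow_mul_exp_neg_mul_Ioi (m : ℕ) {a : ℝ} (ha : 0 < a) :
    ∫ t in Set.Ioi (0 : ℝ), t ^ m * exp (-(a * t)) = m.factorial / a ^ (m + 1) := by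
  have h := integral_rpow_mul_exp_neg_mul_Ioi (a := m + 1) (by positivity) ha
  rw [add_sub_cancel_right, Gamma_nat_eq_factorial, ← Nat.cast_succ, rpow_natCast] at h
  simp_rw [rpow_natCast] at h
  rw [h, one_div, inv_pow, inv_mul_eq_div]

lemma jainL_eq_sum {k : ℕ} (hk : 1 ≤ k) (n : ℕ) (β t : ℝ) :
    jainL n β k t = exp (-(k * β)) / k.factorial *
      ∑ s ∈ range k, (k - 1).choose s * (k * β) ^ s * (n * t) ^ (k - s) * exp (-(n * t)) := by
  obtain ⟨j, rfl⟩ : ∃ j, k = j + 1 := ⟨k - 1, by omega⟩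
  rw [jainL, show ((j + 1 : ℕ) : ℤ) - 1 = (j : ℕ) by push_cast; ring, zpow_natCast, add_comm,
    add_pow, neg_add, exp_add, Nat.add_sub_cancel]
  simp only [mul_sum, sum_div, sum_mul]
  refine sum_congr rfl fun s hs => ?_
  rw [Nat.sub_add_comm (Nat.lt_succ_iff.mp (mem_range.mp hs)), pow_succ]
  ring

lemma integral_jainL_mul_pow {n : ℕ} (hn : 0 < n) (β : ℝ) {k : ℕ} (hk : 1 ≤ k) (r : ℕ) :
    ∫ t in Set.Ioi (0 : ℝ), jainL n β k t * t ^ r =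
      exp (-(k * β)) / (k.factorial * (n : ℝ) ^ (r + 1)) *
        ∑ s ∈ range k, (k - 1).choose s * (k * β) ^ s * ((k + r - s).factorial : ℝ) := by
  have hn' : (0 : ℝ) < n := Nat.cast_pos.mpr hn
  have hexpand : (fun t : ℝ => jainL n β k t * t ^ r) = fun t => exp (-(k * β)) / k.factorial *
      ∑ s ∈ range k, (k - 1).choose s * (k * β) ^ s * (n : ℝ) ^ (k - s) *
        (t ^ (k + r - s) * exp (-(n * t))) := by
    ext t
    rw [jainL_eq_sum hk, mul_assoc, sum_mul]
    congr 1
    refine sum_congr rfl fun s hs => ?_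
    rw [show k + r - s = (k - s) + r by have := mem_range.mp hs; omega, pow_add, mul_pow]
    ring
  rw [hexpand, integral_const_mul, integral_finsetSum _ fun s _ =>
    (integrableOn_pow_mul_exp_neg_mul_Ioi _ hn').const_mul _, mul_sum, mul_sum]
  refine sum_congr rfl fun s hs => ?_
  rw [integral_const_mul, integral_pow_mul_exp_neg_mul_Ioi _ hn',
    show k + r - s + 1 = (k - s) + (r + 1) by have := mem_range.mp hs; omega, pow_add]
  field_simp

lemma mul_factorial_mul_choose_pred_mul_factorial {k r s : ℕ} (hs : s < k) :
    k * s.factorial * (k - 1).choose s * (k + r - s).factorial =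
      (r + 1).factorial * (k + r - s).choose (r + 1) * k.factorial := by
  have h₁ := Nat.choose_mul_factorial_mul_factorial (show s ≤ k - 1 by omega)
  have h₂ := Nat.choose_mul_factorial_mul_factorial (show r + 1 ≤ k + r - s by omega)
  rw [show k + r - s - (r + 1) = k - 1 - s by omega] at h₂
  apply Nat.eq_of_mul_eq_mul_right (Nat.factorial_pos (k - 1 - s))
  rw [← Nat.mul_factorial_pred (show k ≠ 0 by omega)]
  calc _ = k * ((k - 1).choose s * s.factorial * (k - 1 - s).factorial) *
          (k + r - s).factorial := by ring
    _ = k * (k - 1).factorial *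
          ((k + r - s).choose (r + 1) * (r + 1).factorial * (k - 1 - s).factorial) := by
        rw [h₁, h₂]
    _ = _ := by ring

theorem jain_moment_integral_general (n : ℕ) (hn : 0 < n) (β : ℝ)
    (k : ℕ) (hk : 1 ≤ k) (r : ℕ) :
    ∫ t in Set.Ioi (0:ℝ), jainL n β k t * t ^ r =
      (Nat.factorial (r + 1) : ℝ) / ((k : ℝ) * (n : ℝ) ^ (r + 1)) *
        Real.exp (-((k : ℝ) * β)) *
        ∑ s ∈ Finset.range k,
          (Nat.choose (k + r - s) (r + 1) : ℝ) * ((k : ℝ) * β) ^ s / (Nat.factorial s : ℝ) := by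
  rw [integral_jainL_mul_pow hn β hk r, mul_sum, mul_sum]
  refine sum_congr rfl fun s hs => ?_
  have hcomb : (k * s.factorial * (k - 1).choose s * (k + r - s).factorial : ℝ) =
      (r + 1).factorial * (k + r - s).choose (r + 1) * k.factorial := by
    exact_mod_cast mul_factorial_mul_choose_pred_mul_factorial (r := r) (mem_range.mp hs)
  field_simp
  linear_combination (k * β) ^ s * hcomb

theorem jain_moment_integral (n : ℕ) (hn : 0 < n) (β : ℝ) (hβ0 : 0 ≤ β) (hβ1 : β < 1)
    (k : ℕ) (hk : 1 ≤ k) (r : ℕ) :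
    ∫ t in Set.Ioi (0:ℝ), jainL n β k t * t ^ r =
      (Nat.factorial (r + 1) : ℝ) / ((k : ℝ) * (n : ℝ) ^ (r + 1)) *
        Real.exp (-((k : ℝ) * β)) *
        ∑ s ∈ Finset.range k,
          (Nat.choose (k + r - s) (r + 1) : ℝ) * ((k : ℝ) * β) ^ s / (Nat.factorial s : ℝ) :=
  jain_moment_integral_general n hn β k hk r
end

section
/- For every positive integer n, every real β with 0 ≤ β < 1, every integer k ≥ 1, and every integer r ≥ 0, the normalized moments M_r(k) = (∫_0^∞ L_{n,k}^{(β)}(t) t^r dt) / (∫_0^∞ L_{n,k}^{(β)}(t) dt) satisfy the three-term recurrence n² M_{r+2}(k) = n [ (1−β) k + r + 2 ] M_{r+1}(k) + (r+2) β k M_r(k). -/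
/-!
With `c = kβ` and `k ≥ 1`, `L = jainL n β k` is a polynomial times `e^(-n t)`, and
`F(t) = t^(r+1) (n t + c) L(t) = n t^(r+2) (n t + c)^k e^(-(n t + c)) / k!` has derivative
`n ((1-β)k + r + 2) t^(r+1) L - n² t^(r+2) L + (r+2) c t^r L`.
Since `F(0) = 0` and `F → 0` at infinity, integrating `F'` over `(0, ∞)` gives the recurrence for
the unnormalised moments `∫ L t^r`; dividing by `∫ L` gives the normalised one.
-/

open MeasureTheory Real Filter

open Topology Polynomial

namespace Polynomial

variable (p : ℝ[X]) {b : ℝ}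

theorem tendsto_eval_mul_exp_neg_mul_atTop (hb : 0 < b) :
    Tendsto (fun t ↦ p.eval t * exp (-(b * t))) atTop (𝓝 0) := by
  convert ((p.comp (C b⁻¹ * X)).tendsto_div_exp_atTop).comp
    (tendsto_id.const_mul_atTop hb) using 2 with t
  simp [inv_mul_cancel_left₀ hb.ne', exp_neg, div_eq_mul_inv]

theorem integrableOn_eval_mul_exp_neg_mul_Ioi (hb : 0 < b) (a : ℝ) :
    IntegrableOn (fun t ↦ p.eval t * exp (-(b * t))) (Set.Ioi a) := by
  refine integrable_of_isBigO_exp_neg (half_pos hb) (by fun_prop) ?_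
  have hbounded := (p.tendsto_eval_mul_exp_neg_mul_atTop (half_pos hb)).isBigO_one ℝ
  refine (hbounded.mul (Asymptotics.isBigO_refl (fun t ↦ exp (-(b / 2) * t)) atTop)).congr
    (fun t ↦ ?_) (fun t ↦ one_mul _)
  rw [mul_assoc, ← exp_add]
  ring_nf

end Polynomial

theorem jainL_succ (n : ℕ) (β : ℝ) (k : ℕ) (t : ℝ) :
    jainL n β (k + 1) t = n * t * (n * t + (k + 1) * β) ^ k / (k + 1).factorial *
      exp (-(n * t + (k + 1) * β)) := by
  simp [jainL, ← zpow_natCast]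

theorem exists_jainL_succ_eq_eval_mul_exp (n : ℕ) (β : ℝ) (k : ℕ) :
    ∃ p : ℝ[X], ∀ t, jainL n β (k + 1) t = p.eval t * exp (-(n * t)) := by
  refine ⟨C (n * exp (-((k + 1) * β)) / (k + 1).factorial) * X *
    (C (n : ℝ) * X + C ((k + 1) * β)) ^ k, fun t ↦ ?_⟩
  simp only [jainL_succ, eval_mul, eval_pow, eval_add, eval_C, eval_X, neg_add, exp_add]
  ring

theorem integrableOn_jainL_succ_mul_pow {n : ℕ} (hn : 0 < n) (β : ℝ) (k j : ℕ) :
    IntegrableOn (fun t ↦ jainL n β (k + 1) t * t ^ j) (Set.Ioi 0) := by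
  obtain ⟨p, hp⟩ := exists_jainL_succ_eq_eval_mul_exp n β k
  convert (p * X ^ j).integrableOn_eval_mul_exp_neg_mul_Ioi (Nat.cast_pos.mpr hn) 0 using 2 with t
  simp only [hp, eval_mul, eval_pow, eval_X]
  ring

theorem hasDerivAt_jainL_succ_antideriv (n : ℕ) (β : ℝ) (k r : ℕ) (t : ℝ) :
    HasDerivAt (fun t ↦ t ^ (r + 1) * (n * t + (k + 1) * β) * jainL n β (k + 1) t)
      (n * ((1 - β) * (k + 1) + r + 2) * (jainL n β (k + 1) t * t ^ (r + 1)) +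
        (r + 2) * β * (k + 1) * (jainL n β (k + 1) t * t ^ r) -
        n ^ 2 * (jainL n β (k + 1) t * t ^ (r + 2))) t := by
  have hlin : HasDerivAt (fun t : ℝ ↦ n * t + (k + 1) * β) n t := by
    simpa using ((hasDerivAt_id t).const_mul (n : ℝ)).add_const ((k + 1) * β)
  have hexp : HasDerivAt (fun t ↦ exp (-(n * t + (k + 1) * β)))
      (exp (-(n * t + (k + 1) * β)) * -n) t := hlin.neg.exp
  have hpow : HasDerivAt (fun t ↦ (n * t + (k + 1) * β) ^ (k + 1))
      ((k + 1 : ℕ) * (n * t + (k + 1) * β) ^ k * n) t := by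
    simpa using hlin.fun_pow (k + 1)
  have hform : (fun t ↦ t ^ (r + 1) * (n * t + (k + 1) * β) * jainL n β (k + 1) t) =
      fun t ↦ n / (k + 1).factorial *
        (t ^ (r + 2) * (n * t + (k + 1) * β) ^ (k + 1) * exp (-(n * t + (k + 1) * β))) := by
    ext t
    rw [jainL_succ]
    ring
  rw [hform]
  refine ((((hasDerivAt_pow (r + 2) t).mul hpow).mul hexp).const_mul
    (n / (k + 1).factorial : ℝ)).congr_deriv ?_
  simp only [jainL_succ, Pi.mul_apply]
  push_cast
  field_simp
  ring

theorem tendsto_jainL_succ_antideriv_atTop {n : ℕ} (hn : 0 < n) (β : ℝ) (k r : ℕ) :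
    Tendsto (fun t ↦ t ^ (r + 1) * (n * t + (k + 1) * β) * jainL n β (k + 1) t)
      atTop (𝓝 0) := by
  obtain ⟨p, hp⟩ := exists_jainL_succ_eq_eval_mul_exp n β k
  convert (X ^ (r + 1) * (C (n : ℝ) * X + C ((k + 1) * β)) * p).tendsto_eval_mul_exp_neg_mul_atTop
    (Nat.cast_pos.mpr hn) using 2 with t
  simp only [hp, eval_mul, eval_pow, eval_add, eval_C, eval_X]
  ring

theorem integral_jainL_succ_mul_pow_add_two {n : ℕ} (hn : 0 < n) (β : ℝ) (k r : ℕ) :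
    (n : ℝ) ^ 2 * ∫ t in Set.Ioi 0, jainL n β (k + 1) t * t ^ (r + 2) =
      n * ((1 - β) * ((k + 1 : ℕ) : ℝ) + r + 2) *
          (∫ t in Set.Ioi 0, jainL n β (k + 1) t * t ^ (r + 1)) +
        (r + 2) * β * ((k + 1 : ℕ) : ℝ) * ∫ t in Set.Ioi 0, jainL n β (k + 1) t * t ^ r := by
  have hterm (a : ℝ) (j : ℕ) := (integrableOn_jainL_succ_mul_pow hn β k j).const_mul a
  have hFTC := integral_Ioi_of_hasDerivAt_of_tendsto'
    (fun t _ ↦ hasDerivAt_jainL_succ_antideriv n β k r t)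
    (((hterm _ (r + 1)).fun_add (hterm _ r)).sub (hterm _ (r + 2)))
    (tendsto_jainL_succ_antideriv_atTop hn β k r)
  rw [zero_pow r.succ_ne_zero, zero_mul, zero_mul, sub_self,
    integral_sub ((hterm _ (r + 1)).fun_add (hterm _ r)) (hterm _ (r + 2)),
    integral_add (hterm _ (r + 1)) (hterm _ r),
    integral_const_mul, integral_const_mul, integral_const_mul] at hFTC
  push_cast
  linarith

theorem jain_moment_recurrence_general (n : ℕ) (hn : 0 < n) (β : ℝ)
    (k : ℕ) (hk : 1 ≤ k) (r : ℕ) :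
    (n : ℝ) ^ 2 * ((∫ t in Set.Ioi (0:ℝ), jainL n β k t * t ^ (r + 2)) /
        (∫ t in Set.Ioi (0:ℝ), jainL n β k t)) =
      (n : ℝ) * ((1 - β) * (k : ℝ) + (r : ℝ) + 2) *
        ((∫ t in Set.Ioi (0:ℝ), jainL n β k t * t ^ (r + 1)) /
          (∫ t in Set.Ioi (0:ℝ), jainL n β k t)) +
      ((r : ℝ) + 2) * β * (k : ℝ) *
        ((∫ t in Set.Ioi (0:ℝ), jainL n β k t * t ^ r) /
          (∫ t in Set.Ioi (0:ℝ), jainL n β k t)) := by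
  obtain ⟨m, rfl⟩ := Nat.exists_eq_add_of_le' hk
  rw [mul_div_assoc', mul_div_assoc', mul_div_assoc', integral_jainL_succ_mul_pow_add_two hn,
    add_div]

theorem jain_moment_recurrence (n : ℕ) (hn : 0 < n) (β : ℝ) (hβ0 : 0 ≤ β) (hβ1 : β < 1)
    (k : ℕ) (hk : 1 ≤ k) (r : ℕ) :
    (n : ℝ) ^ 2 * ((∫ t in Set.Ioi (0:ℝ), jainL n β k t * t ^ (r + 2)) /
        (∫ t in Set.Ioi (0:ℝ), jainL n β k t)) =
      (n : ℝ) * ((1 - β) * (k : ℝ) + (r : ℝ) + 2) *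
        ((∫ t in Set.Ioi (0:ℝ), jainL n β k t * t ^ (r + 1)) /
          (∫ t in Set.Ioi (0:ℝ), jainL n β k t)) +
      ((r : ℝ) + 2) * β * (k : ℝ) *
        ((∫ t in Set.Ioi (0:ℝ), jainL n β k t * t ^ r) /
          (∫ t in Set.Ioi (0:ℝ), jainL n β k t)) :=
  jain_moment_recurrence_general n hn β k hk r
end
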